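/- arXiv:2007.06408 — 6 statements merged into one kernel-verified Lean document; each statement's English description precedes it below -/
import Mathlib

section
/- Let V be a d-dimensional linear subspace of ℝ^p that is not orthogonal to the first standard basis vector e₁. Then there exist indices i₁ < ⋯ < i_{p−d}, all different from 1, such that the (p−d)-dimensional subspace W spanned by {e_{i₁}, …, e_{i_{p−d}}} satisfies W ⊥ e₁ and W ∩ V = {0}. -/
/-!
Since `V` contains a vector with nonzero first coordinate, `V` together with the basis vectors
`eⱼ`, `j ≠ 1`, spans `ℝ^p`. Among these `eⱼ` pick a family whose images form a basis of the
quotient `ℝ^p ⧸ V`: it has `p - d` members, and its independence modulo `V` says exactly that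
its span meets `V` trivially.
-/

open Module Submodule

theorem Submodule.exists_finset_subset_disjoint_span_image {K E ι : Type*} [Field K]
    [AddCommGroup E] [Module K E] [FiniteDimensional K E] (V : Submodule K E) (f : ι → E)
    {T : Set ι} (hT : V ⊔ span K (f '' T) = ⊤) :
    ∃ s : Finset ι, ↑s ⊆ T ∧ s.card = finrank K E - finrank K V ∧
      Disjoint (span K (f '' s)) V := by
  obtain ⟨b, hbT, -, hTb, hli⟩ :=
    exists_linearIndepOn_extension (v := V.mkQ ∘ f) (linearIndepOn_empty K _) (Set.empty_subset T)
  have hb_top : span K ((V.mkQ ∘ f) '' b) = ⊤ := by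
    rw [eq_top_iff, ← (map_mkQ_eq_top _ _).2 hT, map_span, ← Set.image_comp]
    exact span_le.2 hTb
  have : Finite b := hli.linearIndependent.finite
  obtain ⟨s, rfl⟩ := (Set.toFinite b).exists_finset_coe
  refine ⟨s, hbT, ?_, ?_⟩
  · have hcard := finrank_span_eq_card hli.linearIndependent
    rw [← Set.image_eq_range, hb_top, finrank_top, ← Nat.card_eq_fintype_card,
      Nat.card_coe_set_eq, Set.ncard_coe_finset] at hcard
    rw [← hcard, ← V.finrank_quotient_add_finrank, Nat.add_sub_cancel]
  · simpa [Set.image_eq_range] using range_ker_disjoint (f := V.mkQ) hli.linearIndependent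

theorem EuclideanSpace.apply_eq_zero_of_mem_span_single {𝕜 ι : Type*} [RCLike 𝕜] [Fintype ι]
    [DecidableEq ι] {s : Set ι} {i : ι} (hi : i ∉ s) {w : EuclideanSpace 𝕜 ι}
    (hw : w ∈ span 𝕜 ((fun j => EuclideanSpace.single j (1 : 𝕜)) '' s)) : w i = 0 := by
  suffices span 𝕜 ((fun j => EuclideanSpace.single j (1 : 𝕜)) '' s) ≤
      LinearMap.ker (EuclideanSpace.proj (𝕜 := 𝕜) i).toLinearMap from this hw
  rw [span_le]
  rintro _ ⟨j, hj, rfl⟩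
  simp [show i ≠ j by rintro rfl; exact hi hj]

theorem EuclideanSpace.sup_span_single_compl_eq_top {𝕜 ι : Type*} [RCLike 𝕜] [Fintype ι]
    [DecidableEq ι] (V : Submodule 𝕜 (EuclideanSpace 𝕜 ι)) {v : EuclideanSpace 𝕜 ι} (hvV : v ∈ V)
    {i : ι} (hvi : v i ≠ 0) :
    V ⊔ span 𝕜 ((fun j => EuclideanSpace.single j (1 : 𝕜)) '' {i}ᶜ) = ⊤ := by
  set W := V ⊔ span 𝕜 ((fun j => EuclideanSpace.single j (1 : 𝕜)) '' {i}ᶜ)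
  have hsingle_ne : ∀ j ≠ i, EuclideanSpace.single j (1 : 𝕜) ∈ W := fun j hj =>
    mem_sup_right (subset_span ⟨j, hj, rfl⟩)
  have hsingle : EuclideanSpace.single i (1 : 𝕜) ∈ W := by
    have hv : v = v i • EuclideanSpace.single i 1 +
        ∑ k ∈ {i}ᶜ, v k • EuclideanSpace.single k (1 : 𝕜) := by
      rw [← Fintype.sum_eq_add_sum_compl i (fun k => v k • EuclideanSpace.single k (1 : 𝕜))]
      simpa using ((EuclideanSpace.basisFun ι 𝕜).sum_repr v).symm
    rw [← smul_mem_iff W hvi, eq_sub_of_add_eq hv.symm]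
    exact sub_mem (mem_sup_left hvV) (sum_mem fun k hk =>
      smul_mem W _ (hsingle_ne k (Finset.mem_compl.1 hk ∘ Finset.mem_singleton.2)))
  rw [eq_top_iff, ← (EuclideanSpace.basisFun ι 𝕜).toBasis.span_eq, span_le]
  rintro _ ⟨j, rfl⟩
  rcases eq_or_ne j i with rfl | hj
  · simpa using hsingle
  · simpa using hsingle_ne j hj

/-- Linear algebra lemma: if a `d`-dimensional subspace `V` of `ℝ^p` is not
orthogonal to the first standard basis vector, then there is a coordinate
subspace `W` of dimension `p - d`, spanned by standard basis vectors different
from the first one, which is orthogonal to the first basis vector and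
intersects `V` trivially. -/
theorem stmt0 (p d : ℕ) (hp : 0 < p)
    (V : Submodule ℝ (EuclideanSpace ℝ (Fin p)))
    (hV : Module.finrank ℝ V = d)
    (hnotperp : ∃ v ∈ V, inner ℝ v (EuclideanSpace.single (⟨0, hp⟩ : Fin p) (1 : ℝ)) ≠ (0 : ℝ)) :
    ∃ s : Finset (Fin p), s.card = p - d ∧ (⟨0, hp⟩ : Fin p) ∉ s ∧
      (∀ w ∈ Submodule.span ℝ ((fun i => EuclideanSpace.single i (1 : ℝ)) '' (s : Set (Fin p))),
        inner ℝ w (EuclideanSpace.single (⟨0, hp⟩ : Fin p) (1 : ℝ)) = (0 : ℝ)) ∧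
      Submodule.span ℝ ((fun i => EuclideanSpace.single i (1 : ℝ)) '' (s : Set (Fin p))) ⊓ V = ⊥ := by
  obtain ⟨v, hvV, hv⟩ := hnotperp
  have hv0 : v ⟨0, hp⟩ ≠ 0 := by simpa [EuclideanSpace.inner_single_right] using hv
  obtain ⟨s, hs, hcard, hdisj⟩ := V.exists_finset_subset_disjoint_span_image _
    (EuclideanSpace.sup_span_single_compl_eq_top V hvV hv0)
  have h0 : (⟨0, hp⟩ : Fin p) ∉ s := fun h => hs h rfl
  refine ⟨s, by rw [hcard, finrank_euclideanSpace_fin, hV], h0, fun w hw => ?_, disjoint_iff.1 hdisj⟩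
  simp [EuclideanSpace.inner_single_right, EuclideanSpace.apply_eq_zero_of_mem_span_single h0 hw]
end

section
/- Let K : ℝ_{≥0} → ℝ be bounded and Riemann integrable on every interval [0, a]. Then for any q ≥ 1 and any closed rectangle A ⊆ ℝ^q, the function v ↦ K(‖v‖) is Riemann integrable on A, where ‖·‖ is the Euclidean norm on ℝ^q. -/
open MeasureTheory

/-- A function is Riemann integrable on a set iff it is bounded there and (by
Lebesgue's criterion) its set of discontinuity points within the set has
Lebesgue measure zero. -/
def RiemannIntegrableOn {E : Type*} [MeasurableSpace E] [TopologicalSpace E]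
    (f : E → ℝ) (A : Set E) (μ : Measure E) : Prop :=
  Bornology.IsBounded (f '' A) ∧ μ {x ∈ A | ¬ ContinuousWithinAt f A x} = 0

/-!
If `A ⊆ closedBall 0 a`, then every discontinuity of `K ∘ ‖·‖` within `A` lies over a
discontinuity of `K` within `[0, a]`, so it suffices that the norm pulls Lebesgue-null sets
back to null sets. This holds because, in polar coordinates, an additive Haar measure on a
nontrivial finite-dimensional space is the product of a measure on the unit sphere with
`r ^ (dim - 1) dr` on `(0, ∞)`.
-/

open Set Metric Measure

theorem RiemannIntegrableOn.comp_quasiMeasurePreserving {E F : Type*} [MeasurableSpace E]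
    [TopologicalSpace E] [MeasurableSpace F] [TopologicalSpace F] {f : F → ℝ} {B : Set F}
    {ν : Measure F} (hf : RiemannIntegrableOn f B ν) {g : E → F} {A : Set E} {μ : Measure E}
    (hg : ContinuousOn g A) (hgAB : MapsTo g A B) (hgμν : QuasiMeasurePreserving g μ ν) :
    RiemannIntegrableOn (f ∘ g) A μ := by
  refine ⟨hf.1.subset ?_, measure_mono_null ?_ (hgμν.preimage_null hf.2)⟩
  · rw [image_comp]
    exact image_mono hgAB.image_subset
  · rintro x ⟨hx, hdisc⟩
    exact ⟨hgAB hx, fun hcont ↦ hdisc (hcont.comp (hg x hx) hgAB)⟩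

theorem quasiMeasurePreserving_subtype_val_volumeIoiPow (n : ℕ) :
    QuasiMeasurePreserving (Subtype.val : Ioi (0 : ℝ) → ℝ) (volumeIoiPow n) volume := by
  refine ⟨measurable_subtype_coe, ?_⟩
  refine ((withDensity_absolutelyContinuous _ _).map measurable_subtype_coe).trans ?_
  rw [map_comap_subtype_coe measurableSet_Ioi]
  exact absolutelyContinuous_of_le restrict_le_self

theorem quasiMeasurePreserving_norm {E : Type*} [NormedAddCommGroup E] [NormedSpace ℝ E]
    [FiniteDimensional ℝ E] [Nontrivial E] [MeasurableSpace E] [BorelSpace E]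
    (μ : Measure E) [μ.IsAddHaarMeasure] :
    QuasiMeasurePreserving (‖·‖ : E → ℝ) μ volume := by
  have hpunctured : QuasiMeasurePreserving (fun x : ({0}ᶜ : Set E) ↦ ‖(x : E)‖)
      (μ.comap Subtype.val) volume := by
    convert ((quasiMeasurePreserving_subtype_val_volumeIoiPow _).comp
      quasiMeasurePreserving_snd).comp
      (measurePreserving_homeomorphUnitSphereProd μ).quasiMeasurePreserving using 1
    ext x
    simp
  have hμ : (μ.comap Subtype.val).map (Subtype.val : ({0}ᶜ : Set E) → E) = μ := by
    rw [map_comap_subtype_coe (measurableSet_singleton 0).compl, restrict_compl_singleton]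
  refine ⟨measurable_norm, ?_⟩
  rw [← hμ, map_map measurable_norm measurable_subtype_coe]
  exact hpunctured.absolutelyContinuous

theorem EuclideanSpace.isBounded_setOf_forall_mem_Icc {ι : Type*} [Fintype ι] (l u : ι → ℝ) :
    Bornology.IsBounded {v : EuclideanSpace ℝ ι | ∀ i, v i ∈ Icc (l i) (u i)} := by
  have hbox : {v : EuclideanSpace ℝ ι | ∀ i, v i ∈ Icc (l i) (u i)} =
      EuclideanSpace.equiv ι ℝ ⁻¹' Icc l u := by
    ext v
    simp [Pi.le_def, forall_and]
  rw [hbox]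
  exact ((EuclideanSpace.equiv ι ℝ).toHomeomorph.isCompact_preimage.2 isCompact_Icc).isBounded

theorem stmt2_general (K : ℝ → ℝ)
    (hK : ∀ a : ℝ, 0 < a → RiemannIntegrableOn K (Set.Icc 0 a) volume)
    (q : ℕ) (hq : 1 ≤ q)
    (l u : Fin q → ℝ)
    (A : Set (EuclideanSpace ℝ (Fin q)))
    (hA : A = {v : EuclideanSpace ℝ (Fin q) | ∀ i, v i ∈ Set.Icc (l i) (u i)}) :
    RiemannIntegrableOn (fun v => K ‖v‖) A volume := by
  have : Nonempty (Fin q) := ⟨⟨0, hq⟩⟩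
  obtain ⟨a, ha, hAa⟩ :=
    (hA ▸ EuclideanSpace.isBounded_setOf_forall_mem_Icc l u).subset_closedBall_lt 0 0
  refine (hK a ha).comp_quasiMeasurePreserving continuous_norm.continuousOn (fun v hv ↦ ?_)
    (quasiMeasurePreserving_norm volume)
  exact ⟨norm_nonneg v, mem_closedBall_zero_iff.1 (hAa hv)⟩

/-- If `K : ℝ → ℝ` is bounded and Riemann integrable on every interval `[0, a]`,
then for every `q ≥ 1` and every closed rectangle `A ⊆ ℝ^q`, the function
`v ↦ K ‖v‖` is Riemann integrable on `A`. -/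
theorem stmt2 (K : ℝ → ℝ)
    (hbdd : ∃ C, ∀ t, |K t| ≤ C)
    (hK : ∀ a : ℝ, 0 < a → RiemannIntegrableOn K (Set.Icc 0 a) volume)
    (q : ℕ) (hq : 1 ≤ q)
    (l u : Fin q → ℝ)
    (A : Set (EuclideanSpace ℝ (Fin q)))
    (hA : A = {v : EuclideanSpace ℝ (Fin q) | ∀ i, v i ∈ Set.Icc (l i) (u i)}) :
    RiemannIntegrableOn (fun v => K ‖v‖) A volume :=
  stmt2_general K hK q hq l u A hA
end

section
/- The function x ↦ [1/log(log(πx)) − 1/log(log(π(x+1/2)))] / [1/log(log(π(x+1/2))) − 1/log(log(π(x+1)))] is decreasing for sufficiently large x and tends to 1 as x → ∞. Consequently, for all sufficiently large x its value lies strictly in the interval (1, 2). -/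
/-!
Put `φ x = (x log(πx) (log log(πx))²)⁻¹ = -(d/dx) (1 / log log(πx))`, so that the ratio is
`∫_x^{x+1/2} φ / ∫_{x+1/2}^{x+1} φ`. The function `log φ = -(log x + log log(πx) +
2 log log log(πx))` is convex, each term being the logarithm of a positive concave function.
Log-convexity gives `φ(s + d) φ(t) ≤ φ(s) φ(t + d)` for `s ≤ t` and `d ≥ 0`; integrating over
`s ∈ [x, x + 1/2]` and `t ∈ [x + 1/2, x + 1]` shows that the ratio decreases. Since `φ` is
strictly decreasing, the ratio lies between `1` (exclusive) and `φ(x) / φ(x + 1) → 1`.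
-/

open Real Set Filter Topology intervalIntegral

theorem ConvexOn.add_le_add_of_mem_Icc {s : Set ℝ} {f : ℝ → ℝ} (hf : ConvexOn ℝ s f)
    {a b c : ℝ} (ha : a ∈ s) (hb : b ∈ s) (hc : c ∈ Icc a b) :
    f c + f (a + b - c) ≤ f a + f b := by
  obtain ⟨θ, μ, hθ, hμ, hθμ, rfl⟩ := Icc_subset_segment hc
  have h₁ := hf.2 ha hb hθ hμ hθμ
  have h₂ := hf.2 ha hb hμ hθ (by rw [add_comm, hθμ])
  have hswap : a + b - (θ • a + μ • b) = μ • a + θ • b := by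
    simp only [smul_eq_mul]; linear_combination (-(a + b)) * hθμ
  rw [hswap]
  simp only [smul_eq_mul] at h₁ h₂ ⊢
  linear_combination h₁ + h₂ + (f a + f b) * hθμ

theorem ConcaveOn.log_comp {E : Type*} [AddCommGroup E] [Module ℝ E] {s : Set E}
    {f : E → ℝ} (hf : ConcaveOn ℝ s f) (hpos : ∀ x ∈ s, 0 < f x) :
    ConcaveOn ℝ s (fun x => log (f x)) := by
  refine ⟨hf.1, fun x hx y hy a b ha hb hab => ?_⟩
  calc a • log (f x) + b • log (f y) ≤ log (a • f x + b • f y) :=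
        strictConcaveOn_log_Ioi.concaveOn.2 (hpos x hx) (hpos y hy) ha hb hab
    _ ≤ log (f (a • x + b • y)) :=
        log_le_log (convex_Ioi (0 : ℝ) (hpos x hx) (hpos y hy) ha hb hab)
          (hf.2 hx hy ha hb hab)

section IntegralRatio

variable {φ : ℝ → ℝ} {a h x y : ℝ}

theorem mul_le_mul_of_convexOn_log {s : Set ℝ} (hpos : ∀ x ∈ s, 0 < φ x)
    (hφ : ConvexOn ℝ s (fun x => log (φ x))) {b c : ℝ} (ha : a ∈ s) (hb : b ∈ s)
    (hc : c ∈ Icc a b) : φ c * φ (a + b - c) ≤ φ a * φ b := by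
  have hs := hφ.1.ordConnected.out ha hb
  have hc' : a + b - c ∈ Icc a b := ⟨by linarith [hc.2], by linarith [hc.1]⟩
  have hφc := hpos c (hs hc)
  have hφc' := hpos _ (hs hc')
  rw [← log_le_log_iff (mul_pos hφc hφc') (mul_pos (hpos a ha) (hpos b hb)),
    log_mul hφc.ne' hφc'.ne', log_mul (hpos a ha).ne' (hpos b hb).ne']
  exact hφ.add_le_add_of_mem_Icc ha hb hc

theorem intervalIntegrable_of_continuousOn_Ici (hφ : ContinuousOn φ (Ici a)) (hx : a ≤ x)
    (hxy : x ≤ y) : IntervalIntegrable φ MeasureTheory.volume x y :=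
  ContinuousOn.intervalIntegrable_of_Icc hxy (hφ.mono fun _ ht => hx.trans ht.1)

theorem integral_mul_le_integral_mul_shift (hpos : ∀ x ∈ Ici a, 0 < φ x)
    (hφ : ConvexOn ℝ (Ici a) (fun x => log (φ x))) (hcont : ContinuousOn φ (Ici a))
    (hx : a ≤ x) (hxy : x ≤ y) (hh : 0 ≤ h) {t : ℝ} (ht : t ∈ Icc (x + h) (x + h + h)) :
    (∫ s in y..y + h, φ s) * φ t ≤ (∫ s in x..x + h, φ s) * φ (t + (y - x)) := by
  have hshift : (∫ s in y..y + h, φ s) = ∫ s in x..x + h, φ (s + (y - x)) := by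
    rw [integral_comp_add_right]; congr 1 <;> ring
  rw [hshift, ← integral_mul_const, ← integral_mul_const]
  refine integral_mono_on (by linarith) ?_ ?_ fun s hs => ?_
  · refine (ContinuousOn.intervalIntegrable_of_Icc (by linarith) ?_).mul_const _
    exact hcont.comp (continuous_add_const _).continuousOn
      fun u hu => show a ≤ u + (y - x) by linarith [hu.1]
  · exact (intervalIntegrable_of_continuousOn_Ici hcont hx (by linarith)).mul_const _
  · have key := mul_le_mul_of_convexOn_log hpos hφ (c := t) (b := t + (y - x))
      (show a ≤ s by linarith [hs.1]) (show a ≤ t + (y - x) by linarith [ht.1])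
      ⟨by linarith [hs.2, ht.1], by linarith⟩
    rwa [show s + (t + (y - x)) - t = s + (y - x) by ring, mul_comm (φ t)] at key

theorem integral_mul_integral_le_of_convexOn_log (hpos : ∀ x ∈ Ici a, 0 < φ x)
    (hφ : ConvexOn ℝ (Ici a) (fun x => log (φ x))) (hcont : ContinuousOn φ (Ici a))
    (hx : a ≤ x) (hxy : x ≤ y) (hh : 0 ≤ h) :
    (∫ s in y..y + h, φ s) * (∫ s in x + h..x + h + h, φ s) ≤
      (∫ s in x..x + h, φ s) * ∫ s in y + h..y + h + h, φ s := by
  have hshift :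
      (∫ s in y + h..y + h + h, φ s) = ∫ s in x + h..x + h + h, φ (s + (y - x)) := by
    rw [integral_comp_add_right]; congr 1 <;> ring
  rw [hshift, ← integral_const_mul, ← integral_const_mul]
  refine integral_mono_on (by linarith) ?_ ?_
    (fun t ht => integral_mul_le_integral_mul_shift hpos hφ hcont hx hxy hh ht)
  · exact (intervalIntegrable_of_continuousOn_Ici hcont (by linarith) (by linarith)).const_mul _
  · refine (ContinuousOn.intervalIntegrable_of_Icc (by linarith) ?_).const_mul _
    exact hcont.comp (continuous_add_const _).continuousOn
      fun u hu => show a ≤ u + (y - x) by linarith [hu.1]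

theorem integral_pos_of_pos_on_Ici (hpos : ∀ x ∈ Ici a, 0 < φ x)
    (hcont : ContinuousOn φ (Ici a)) (hx : a ≤ x) (hh : 0 < h) : 0 < ∫ s in x..x + h, φ s :=
  intervalIntegral_pos_of_pos_on (intervalIntegrable_of_continuousOn_Ici hcont hx (by linarith))
    (fun s hs => hpos s (hx.trans hs.1.le)) (by linarith)

theorem antitoneOn_integral_ratio (hpos : ∀ x ∈ Ici a, 0 < φ x)
    (hφ : ConvexOn ℝ (Ici a) (fun x => log (φ x))) (hcont : ContinuousOn φ (Ici a))
    (hh : 0 < h) :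
    AntitoneOn (fun x => (∫ s in x..x + h, φ s) / ∫ s in x + h..x + h + h, φ s) (Ici a) := by
  intro x hx y hy hxy
  rw [div_le_div_iff₀ (integral_pos_of_pos_on_Ici hpos hcont (by linarith [hy.out]) hh)
    (integral_pos_of_pos_on_Ici hpos hcont (by linarith [hx.out]) hh)]
  exact integral_mul_integral_le_of_convexOn_log hpos hφ hcont hx hxy hh.le

theorem integral_add_lt_integral (hanti : StrictAntiOn φ (Ici a))
    (hcont : ContinuousOn φ (Ici a)) (hx : a ≤ x) (hh : 0 < h) :
    (∫ s in x + h..x + h + h, φ s) < ∫ s in x..x + h, φ s := by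
  have hshift : (∫ s in x + h..x + h + h, φ s) = ∫ s in x..x + h, φ (s + h) := by
    rw [integral_comp_add_right]
  rw [hshift]
  refine integral_lt_integral_of_continuousOn_of_le_of_exists_lt (by linarith) ?_
    (hcont.mono fun s hs => hx.trans hs.1) (fun s hs => ?_) ⟨x, ⟨le_rfl, by linarith⟩, ?_⟩
  · exact hcont.comp (continuous_add_const _).continuousOn
      fun u hu => show a ≤ u + h by linarith [hu.1]
  · exact (hanti (hx.trans hs.1.le) (show a ≤ s + h by linarith [hs.1]) (by linarith)).le
  · exact hanti hx (show a ≤ x + h by linarith) (by linarith)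

theorem one_lt_integral_ratio (hpos : ∀ x ∈ Ici a, 0 < φ x) (hanti : StrictAntiOn φ (Ici a))
    (hcont : ContinuousOn φ (Ici a)) (hx : a ≤ x) (hh : 0 < h) :
    1 < (∫ s in x..x + h, φ s) / ∫ s in x + h..x + h + h, φ s :=
  (one_lt_div (integral_pos_of_pos_on_Ici hpos hcont (by linarith) hh)).2
    (integral_add_lt_integral hanti hcont hx hh)

theorem integral_ratio_le (hpos : ∀ x ∈ Ici a, 0 < φ x) (hanti : AntitoneOn φ (Ici a))
    (hcont : ContinuousOn φ (Ici a)) (hx : a ≤ x) (hh : 0 < h) :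
    (∫ s in x..x + h, φ s) / (∫ s in x + h..x + h + h, φ s) ≤ φ x / φ (x + h + h) := by
  have hupper : (∫ s in x..x + h, φ s) ≤ h * φ x := by
    simpa using integral_mono_on (a := x) (b := x + h) (by linarith)
      (intervalIntegrable_of_continuousOn_Ici hcont hx (by linarith)) intervalIntegrable_const
      fun s hs => hanti hx (hx.trans hs.1) hs.1
  have hlower : h * φ (x + h + h) ≤ ∫ s in x + h..x + h + h, φ s := by
    simpa using integral_mono_on (a := x + h) (b := x + h + h) (by linarith)
      intervalIntegrable_const
      (intervalIntegrable_of_continuousOn_Ici hcont (by linarith) (by linarith))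
      fun s hs => hanti (show a ≤ s by linarith [hs.1]) (show a ≤ x + h + h by linarith) hs.2
  calc (∫ s in x..x + h, φ s) / (∫ s in x + h..x + h + h, φ s)
      ≤ (h * φ x) / (h * φ (x + h + h)) :=
        div_le_div₀ (mul_pos hh (hpos x hx)).le hupper
          (mul_pos hh (hpos _ (show a ≤ x + h + h by linarith))) hlower
    _ = φ x / φ (x + h + h) := mul_div_mul_left _ _ hh.ne'

theorem tendsto_integral_ratio (hpos : ∀ x ∈ Ici a, 0 < φ x) (hanti : StrictAntiOn φ (Ici a))
    (hcont : ContinuousOn φ (Ici a)) (hh : 0 < h)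
    (hlim : Tendsto (fun x => φ x / φ (x + h + h)) atTop (𝓝 1)) :
    Tendsto (fun x => (∫ s in x..x + h, φ s) / ∫ s in x + h..x + h + h, φ s) atTop (𝓝 1) :=
  tendsto_of_tendsto_of_tendsto_of_le_of_le' tendsto_const_nhds hlim
    ((eventually_ge_atTop a).mono fun _ hx => (one_lt_integral_ratio hpos hanti hcont hx hh).le)
    ((eventually_ge_atTop a).mono fun _ hx =>
      integral_ratio_le hpos hanti.antitoneOn hcont hx hh)

end IntegralRatio

theorem tendsto_log_div_log {f : ℝ → ℝ} {c : ℝ} (hf : Tendsto f atTop atTop)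
    (hr : Tendsto (fun x => f (x + c) / f x) atTop (𝓝 1)) :
    Tendsto (fun x => log (f (x + c)) / log (f x)) atTop (𝓝 1) := by
  have h : Tendsto (fun x => 1 + log (f (x + c) / f x) * (log (f x))⁻¹) atTop
      (𝓝 (1 + log 1 * 0)) :=
    tendsto_const_nhds.add (((continuousAt_log one_ne_zero).tendsto.comp hr).mul
      (tendsto_log_atTop.comp hf).inv_tendsto_atTop)
  rw [log_one, zero_mul, add_zero] at h
  have hshift : Tendsto (fun x => f (x + c)) atTop atTop :=
    hf.comp (tendsto_atTop_add_const_right _ c tendsto_id)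
  refine h.congr' ?_
  filter_upwards [hf.eventually_gt_atTop 1, hshift.eventually_gt_atTop 0] with x hx hxc
  have hlog : 0 < log (f x) := log_pos hx
  rw [log_div hxc.ne' (by linarith)]
  field_simp
  ring

noncomputable def negDerivInvLogLog (x : ℝ) : ℝ := (x * log (π * x) * log (log (π * x)) ^ 2)⁻¹

section LogLog

variable {x y : ℝ}

theorem one_lt_log_pi_mul (hx : 1 ≤ x) : 1 < log (π * x) := by
  rw [lt_log_iff_exp_lt (by positivity)]
  nlinarith [exp_one_lt_d9, pi_gt_three]

theorem log_pi_mul_le_log_pi_mul (hx : 1 ≤ x) (hxy : x ≤ y) : log (π * x) ≤ log (π * y) :=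
  log_le_log (by positivity) (by gcongr)

theorem logLog_pos (hx : 1 ≤ x) : 0 < log (log (π * x)) :=
  log_pos (one_lt_log_pi_mul hx)

theorem logLog_le_logLog (hx : 1 ≤ x) (hxy : x ≤ y) : log (log (π * x)) ≤ log (log (π * y)) :=
  log_le_log (by linarith [one_lt_log_pi_mul hx]) (log_pi_mul_le_log_pi_mul hx hxy)

theorem concaveOn_log_pi_mul : ConcaveOn ℝ (Ici 1) fun x => log (π * x) :=
  ((concaveOn_id (convex_Ici 1)).smul pi_pos.le).log_comp fun x hx => by
    simp only [id, smul_eq_mul]; exact mul_pos pi_pos (by linarith [hx.out])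

theorem convexOn_log_negDerivInvLogLog :
    ConvexOn ℝ (Ici 1) fun x => log (negDerivInvLogLog x) := by
  have hL := concaveOn_log_pi_mul
  have hLL := hL.log_comp fun x hx => by linarith [one_lt_log_pi_mul hx]
  have hLLL := hLL.log_comp fun x hx => logLog_pos hx
  have hlog : ConcaveOn ℝ (Ici 1) log :=
    strictConcaveOn_log_Ioi.concaveOn.subset (Ici_subset_Ioi.2 one_pos) (convex_Ici 1)
  refine ((hlog.add hLL).add (hLLL.smul zero_le_two)).neg.congr fun x hx => ?_
  have hx0 : 0 < x := by linarith [hx.out]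
  have hL0 : 0 < log (π * x) := by linarith [one_lt_log_pi_mul hx]
  simp only [negDerivInvLogLog, Pi.neg_apply, Pi.add_apply, smul_eq_mul, log_inv,
    log_mul (mul_pos hx0 hL0).ne' (pow_pos (logLog_pos hx) 2).ne', log_mul hx0.ne' hL0.ne',
    log_pow]
  push_cast; ring

theorem mul_log_mul_logLog_sq_pos (hx : 1 ≤ x) :
    0 < x * log (π * x) * log (log (π * x)) ^ 2 :=
  mul_pos (mul_pos (by linarith) (by linarith [one_lt_log_pi_mul hx]))
    (pow_pos (logLog_pos hx) 2)

theorem negDerivInvLogLog_pos (hx : 1 ≤ x) : 0 < negDerivInvLogLog x :=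
  inv_pos.2 (mul_log_mul_logLog_sq_pos hx)

theorem strictAntiOn_negDerivInvLogLog : StrictAntiOn negDerivInvLogLog (Ici 1) := by
  intro x hx y hy hxy
  have hxL : x * log (π * x) < y * log (π * y) :=
    mul_lt_mul hxy (log_pi_mul_le_log_pi_mul hx hxy.le)
      (by linarith [one_lt_log_pi_mul hx]) (by linarith [hy.out])
  exact inv_strictAnti₀ (mul_log_mul_logLog_sq_pos hx) (mul_lt_mul hxL
    (pow_le_pow_left₀ (logLog_pos hx).le (logLog_le_logLog hx hxy.le) 2)
    (pow_pos (logLog_pos hx) 2)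
    (mul_pos (by linarith [hy.out]) (by linarith [one_lt_log_pi_mul hy])).le)

theorem continuousOn_negDerivInvLogLog : ContinuousOn negDerivInvLogLog (Ici 1) := by
  have hL : ContinuousOn (fun x => log (π * x)) (Ici 1) :=
    (continuous_const_mul π).continuousOn.log fun x hx =>
      (mul_pos pi_pos (by linarith [hx.out])).ne'
  have hLL : ContinuousOn (fun x => log (log (π * x))) (Ici 1) :=
    hL.log fun x hx => (by linarith [one_lt_log_pi_mul hx] : (0 : ℝ) < log (π * x)).ne'
  exact ((continuousOn_id.mul hL).mul (hLL.pow 2)).inv₀ fun x hx =>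
    (mul_log_mul_logLog_sq_pos hx).ne'

theorem hasDerivAt_one_div_logLog (hx : 1 ≤ x) :
    HasDerivAt (fun y => 1 / log (log (π * y))) (-negDerivInvLogLog x) x := by
  have hx0 : 0 < x := by linarith
  have hL := one_lt_log_pi_mul hx
  have hLL := logLog_pos hx
  have h : HasDerivAt (fun y => (log (log (π * y)))⁻¹)
      (-(π * 1 / (π * x) / log (π * x)) / log (log (π * x)) ^ 2) x :=
    ((((hasDerivAt_id' x).const_mul π).log (mul_pos pi_pos hx0).ne').log
      (by linarith)).inv hLL.ne'
  simpa only [one_div] using h.congr_deriv (by unfold negDerivInvLogLog; field_simp)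

theorem one_div_logLog_sub_eq_integral (hx : 1 ≤ x) (hxy : x ≤ y) :
    1 / log (log (π * x)) - 1 / log (log (π * y)) = ∫ s in x..y, negDerivInvLogLog s := by
  have h := integral_eq_sub_of_hasDerivAt
    (fun s hs => hasDerivAt_one_div_logLog (hx.trans (uIcc_of_le hxy ▸ hs).1))
    (intervalIntegrable_of_continuousOn_Ici continuousOn_negDerivInvLogLog hx hxy).neg
  rw [integral_neg] at h
  linarith

theorem tendsto_negDerivInvLogLog_div_add_one :
    Tendsto (fun x => negDerivInvLogLog x / negDerivInvLogLog (x + 1)) atTop (𝓝 1) := by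
  have hf₀ : Tendsto (fun x => π * x) atTop atTop := tendsto_id.const_mul_atTop pi_pos
  have hr₀ : Tendsto (fun x => π * (x + 1) / (π * x)) atTop (𝓝 1) := by
    have h := (tendsto_const_nhds (x := (1 : ℝ))).add tendsto_inv_atTop_zero
    rw [add_zero] at h
    refine h.congr' ((eventually_gt_atTop 0).mono fun x hx => ?_)
    field_simp
  have hr₁ := tendsto_log_div_log hf₀ hr₀
  have hr₂ := tendsto_log_div_log (tendsto_log_atTop.comp hf₀) hr₁
  have h := (hr₀.mul hr₁).mul (hr₂.pow 2)
  rw [one_pow, mul_one, mul_one] at h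
  refine h.congr' ((eventually_ge_atTop 1).mono fun x hx => ?_)
  have := mul_log_mul_logLog_sq_pos hx
  have := mul_log_mul_logLog_sq_pos (show 1 ≤ x + 1 by linarith)
  have := one_lt_log_pi_mul hx
  have := logLog_pos hx
  simp only [Function.comp, negDerivInvLogLog]
  field_simp

end LogLog

/-- The ratio of consecutive half-period lengths
`[1/log(log(πx)) − 1/log(log(π(x+1/2)))] / [1/log(log(π(x+1/2))) − 1/log(log(π(x+1)))]`
is decreasing for large `x`, tends to `1` as `x → ∞`, and eventually lies
strictly between `1` and `2`. -/
theorem stmt10 :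
    (∃ x₀ : ℝ, AntitoneOn
      (fun x : ℝ =>
        (1 / Real.log (Real.log (Real.pi * x)) -
            1 / Real.log (Real.log (Real.pi * (x + 1 / 2)))) /
          (1 / Real.log (Real.log (Real.pi * (x + 1 / 2))) -
            1 / Real.log (Real.log (Real.pi * (x + 1)))))
      (Set.Ici x₀)) ∧
    Filter.Tendsto
      (fun x : ℝ =>
        (1 / Real.log (Real.log (Real.pi * x)) -
            1 / Real.log (Real.log (Real.pi * (x + 1 / 2)))) /
          (1 / Real.log (Real.log (Real.pi * (x + 1 / 2))) -
            1 / Real.log (Real.log (Real.pi * (x + 1)))))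
      Filter.atTop (nhds 1) ∧
    (∀ᶠ x : ℝ in Filter.atTop,
      (1 / Real.log (Real.log (Real.pi * x)) -
          1 / Real.log (Real.log (Real.pi * (x + 1 / 2)))) /
        (1 / Real.log (Real.log (Real.pi * (x + 1 / 2))) -
          1 / Real.log (Real.log (Real.pi * (x + 1)))) ∈ Set.Ioo (1 : ℝ) 2) := by
  have hhalf : ∀ x : ℝ, x + 1 / 2 + 1 / 2 = x + 1 := fun x => by ring
  have hpos := fun x (hx : x ∈ Ici (1 : ℝ)) => negDerivInvLogLog_pos hx
  have hφ := continuousOn_negDerivInvLogLog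
  have hanti := strictAntiOn_negDerivInvLogLog
  have hratio : EqOn (fun x => (∫ s in x..x + 1 / 2, negDerivInvLogLog s) /
        ∫ s in x + 1 / 2..x + 1 / 2 + 1 / 2, negDerivInvLogLog s)
      (fun x : ℝ => (1 / log (log (π * x)) - 1 / log (log (π * (x + 1 / 2)))) /
        (1 / log (log (π * (x + 1 / 2))) - 1 / log (log (π * (x + 1))))) (Ici 1) := by
    intro x hx
    simp only [← hhalf x]
    rw [one_div_logLog_sub_eq_integral hx (by linarith),
      one_div_logLog_sub_eq_integral (by linarith [hx.out]) (by linarith)]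
  have hlim := (tendsto_integral_ratio hpos hanti hφ one_half_pos
    (by simpa only [hhalf] using tendsto_negDerivInvLogLog_div_add_one)).congr'
    (eventually_ge_atTop 1 |>.mono hratio)
  refine ⟨⟨1, (antitoneOn_integral_ratio hpos convexOn_log_negDerivInvLogLog hφ
    one_half_pos).congr hratio⟩, hlim, ?_⟩
  filter_upwards [eventually_ge_atTop 1, hlim.eventually_lt_const one_lt_two] with x hx hx₂
  exact ⟨(one_lt_integral_ratio hpos hanti hφ hx one_half_pos).trans_eq (hratio hx), hx₂⟩
end

section
/- Let g(z) = exp(exp(1/z)) for z > 0 and fix ε > 0. Then the function z ↦ g(z − ε)/g(z) is strictly decreasing on (ε, ∞), and for every z with ε < z < ε − 1/log ε (with 0 < ε < 1 so that −1/log ε > 0), one has g'(z−ε)/g'(z) > g(z−ε)/g(z) ≥ g(−1/log ε)/g(ε − 1/log ε). -/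
/-!
With `h(w) = exp(1/w)` we have `g = exp ∘ h` and `h' = -φ`, where `φ(w) = exp(1/w)/w²` is strictly
decreasing on `(0, ∞)`. Hence `log (g(z-ε)/g(z)) = h(z-ε) - h(z)` has derivative
`φ(z) - φ(z-ε) < 0`, and `g' = -g φ` gives
`g'(z-ε)/g'(z) = (g(z-ε)/g(z)) · (φ(z-ε)/φ(z))` with the last factor `> 1`.
The lower bound is the monotonicity at the right end point `ε - 1/log ε`.
-/

open Real Set

lemma hasDerivAt_exp_one_div {w : ℝ} (hw : w ≠ 0) :
    HasDerivAt (fun w => exp (1 / w)) (-(exp (1 / w) / w ^ 2)) w := by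
  simpa [one_div, div_eq_mul_inv] using (hasDerivAt_inv hw).exp

lemma hasDerivAt_exp_exp_one_div {w : ℝ} (hw : w ≠ 0) :
    HasDerivAt (fun w => exp (exp (1 / w))) (-(exp (exp (1 / w)) * (exp (1 / w) / w ^ 2))) w := by
  simpa using (hasDerivAt_exp_one_div hw).exp

lemma strictAntiOn_exp_one_div_div_sq :
    StrictAntiOn (fun w : ℝ => exp (1 / w) / w ^ 2) (Ioi 0) := by
  intro a (ha : 0 < a) b (hb : 0 < b) hab
  have hexp : exp (1 / b) < exp (1 / a) := exp_lt_exp.mpr (one_div_lt_one_div_of_lt ha hab)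
  have hsq : a ^ 2 ≤ b ^ 2 := pow_le_pow_left₀ ha.le hab.le 2
  exact div_lt_div₀ hexp hsq (exp_pos _).le (by positivity)

lemma strictAntiOn_exp_one_div_sub_exp_one_div {ε : ℝ} (hε : 0 < ε) :
    StrictAntiOn (fun z => exp (1 / (z - ε)) - exp (1 / z)) (Ioi ε) := by
  have hderiv : ∀ z ∈ Ioi ε, HasDerivAt (fun z => exp (1 / (z - ε)) - exp (1 / z))
      (-(exp (1 / (z - ε)) / (z - ε) ^ 2) - -(exp (1 / z) / z ^ 2)) z := fun z (hz : ε < z) =>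
    ((hasDerivAt_exp_one_div (sub_pos.mpr hz).ne').comp_sub_const z ε).sub
      (hasDerivAt_exp_one_div (hε.trans hz).ne')
  refine strictAntiOn_of_hasDerivWithinAt_neg (convex_Ioi ε)
    (fun z hz => (hderiv z hz).continuousAt.continuousWithinAt)
    (fun z hz => (hderiv z (interior_subset hz)).hasDerivWithinAt) fun z hz => ?_
  rw [interior_Ioi, mem_Ioi] at hz
  have := strictAntiOn_exp_one_div_div_sq (sub_pos.mpr hz) (mem_Ioi.mpr (hε.trans hz))
    (sub_lt_self z hε)
  simp only at this
  linarith

lemma strictAntiOn_exp_exp_one_div_ratio {ε : ℝ} (hε : 0 < ε) :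
    StrictAntiOn (fun z => exp (exp (1 / (z - ε))) / exp (exp (1 / z))) (Ioi ε) := by
  simp_rw [← exp_sub]
  exact exp_strictMono.comp_strictAntiOn (strictAntiOn_exp_one_div_sub_exp_one_div hε)

lemma exp_exp_one_div_ratio_lt_deriv_ratio {ε z : ℝ} (hε : 0 < ε) (hz : ε < z) :
    exp (exp (1 / (z - ε))) / exp (exp (1 / z)) <
      deriv (fun w => exp (exp (1 / w))) (z - ε) / deriv (fun w => exp (exp (1 / w))) z := by
  have hzε : 0 < z - ε := sub_pos.mpr hz
  have hz0 : 0 < z := hε.trans hz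
  rw [(hasDerivAt_exp_exp_one_div hzε.ne').deriv, (hasDerivAt_exp_exp_one_div hz0.ne').deriv,
    neg_div_neg_eq, mul_div_mul_comm]
  refine lt_mul_of_one_lt_right (by positivity) ((one_lt_div (by positivity)).mpr ?_)
  exact strictAntiOn_exp_one_div_div_sq hzε hz0 (sub_lt_self z hε)

theorem stmt12_general (ε : ℝ) (hε : 0 < ε) :
    StrictAntiOn
      (fun z : ℝ => Real.exp (Real.exp (1 / (z - ε))) / Real.exp (Real.exp (1 / z)))
      (Set.Ioi ε) ∧
    ∀ z : ℝ, ε < z → z < ε - 1 / Real.log ε →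
      (deriv (fun w : ℝ => Real.exp (Real.exp (1 / w))) (z - ε)) /
          (deriv (fun w : ℝ => Real.exp (Real.exp (1 / w))) z) >
        Real.exp (Real.exp (1 / (z - ε))) / Real.exp (Real.exp (1 / z)) ∧
      Real.exp (Real.exp (1 / (z - ε))) / Real.exp (Real.exp (1 / z)) ≥
        Real.exp (Real.exp (1 / (-1 / Real.log ε))) /
          Real.exp (Real.exp (1 / (ε - 1 / Real.log ε))) := by
  have hanti := strictAntiOn_exp_exp_one_div_ratio hε
  refine ⟨hanti, fun z hz hzR => ⟨exp_exp_one_div_ratio_lt_deriv_ratio hε hz, ?_⟩⟩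
  have hR : ε < ε - 1 / log ε := hz.trans hzR
  have := (hanti hz hR hzR).le
  simp only [sub_sub_cancel_left] at this
  rwa [neg_div]

/-- For `g(z) = exp(exp(1/z))` and `0 < ε < 1`, the ratio `z ↦ g(z−ε)/g(z)` is
strictly decreasing on `(ε, ∞)`, and for every `z` with
`ε < z < ε − 1/log ε` one has
`g'(z−ε)/g'(z) > g(z−ε)/g(z) ≥ g(−1/log ε)/g(ε − 1/log ε)`. -/
theorem stmt12 (ε : ℝ) (hε : 0 < ε) (hε1 : ε < 1) :
    StrictAntiOn
      (fun z : ℝ => Real.exp (Real.exp (1 / (z - ε))) / Real.exp (Real.exp (1 / z)))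
      (Set.Ioi ε) ∧
    ∀ z : ℝ, ε < z → z < ε - 1 / Real.log ε →
      (deriv (fun w : ℝ => Real.exp (Real.exp (1 / w))) (z - ε)) /
          (deriv (fun w : ℝ => Real.exp (Real.exp (1 / w))) z) >
        Real.exp (Real.exp (1 / (z - ε))) / Real.exp (Real.exp (1 / z)) ∧
      Real.exp (Real.exp (1 / (z - ε))) / Real.exp (Real.exp (1 / z)) ≥
        Real.exp (Real.exp (1 / (-1 / Real.log ε))) /
          Real.exp (Real.exp (1 / (ε - 1 / Real.log ε))) :=
  stmt12_general ε hε
end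

section
/- For all sufficiently small ε ∈ (0,1), one has g(−1/log ε)/g(ε − 1/log ε) ≥ exp((1/4) (log ε)²), where g(z) = exp(exp(1/z)). In particular this ratio tends to ∞ as ε → 0⁺. -/
/-!
Write `ε = exp (-x)` with `x = -log ε > 0`. Then `1 / (-1 / log ε) = x` and
`1 / (ε - 1 / log ε) = x - t` with `t = ε x² / (1 + ε x)`, so the ratio is
`exp (eˣ (1 - e⁻ᵗ))`. Since `1 - e⁻ᵗ ≥ t / (1 + t)` and `ε eˣ = 1`, the exponent is at least
`x² / (1 + ε x + ε x²)`, and `ε x ≤ 1`, `ε x² ≤ 2` (from `eˣ ≥ 1 + x`, `eˣ ≥ x² / 2`) bound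
this below by `x² / 4`. This holds for every `ε ∈ (0, 1)`.
-/

open Real Filter Topology

lemma div_one_add_le_one_sub_exp_neg {t : ℝ} (ht : -1 < t) : t / (1 + t) ≤ 1 - exp (-t) := by
  have h : 0 < 1 + t := by linarith
  have hexp : exp (-t) ≤ 1 / (1 + t) := by
    rw [exp_neg, ← one_div]
    exact one_div_le_one_div_of_le h (by linarith [add_one_le_exp t])
  calc t / (1 + t) = 1 - 1 / (1 + t) := by field_simp; ring
    _ ≤ 1 - exp (-t) := by linarith

lemma sq_div_four_le_exp_sub_exp {x : ℝ} (hx : 0 ≤ x) :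
    x ^ 2 / 4 ≤ exp x - exp (x / (exp (-x) * x + 1)) := by
  set ε := exp (-x)
  have hε : 0 < ε := exp_pos _
  have hεx : ε * exp x = 1 := by rw [← exp_add]; simp
  have hx1 : ε * x ≤ 1 := by
    nlinarith [mul_le_mul_of_nonneg_left (add_one_le_exp x) hε.le]
  have hx2 : ε * x ^ 2 ≤ 2 := by
    have := pow_div_factorial_le_exp x hx 2
    norm_num at this
    nlinarith [mul_le_mul_of_nonneg_left this hε.le]
  set t := ε * x ^ 2 / (ε * x + 1) with ht
  have hshift : x / (ε * x + 1) = x - t := by rw [ht]; field_simp; ring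
  calc x ^ 2 / 4 ≤ x ^ 2 / (1 + ε * x + ε * x ^ 2) := by
        gcongr; linarith
    _ = exp x * (t / (1 + t)) := by
        rw [ht]; field_simp; linear_combination (-(x ^ 2 * (1 + x * ε + x ^ 2 * ε))) * hεx
    _ ≤ exp x * (1 - exp (-t)) := by
        gcongr; exact div_one_add_le_one_sub_exp_neg (by linarith [show 0 ≤ t by positivity])
    _ = exp x - exp (x / (ε * x + 1)) := by rw [hshift, sub_eq_add_neg x t, exp_add]; ring

lemma exp_quarter_log_sq_le {ε : ℝ} (h0 : 0 < ε) (h1 : ε < 1) :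
    exp (1 / 4 * log ε ^ 2) ≤
      exp (exp (1 / (-1 / log ε))) / exp (exp (1 / (ε - 1 / log ε))) := by
  obtain ⟨x, hx, rfl⟩ : ∃ x, 0 < x ∧ ε = exp (-x) :=
    ⟨-log ε, by linarith [log_neg h0 h1], by rw [neg_neg, exp_log h0]⟩
  have hinv : 1 / (exp (-x) - 1 / log (exp (-x))) = x / (exp (-x) * x + 1) := by
    have : exp (-x) * x + 1 ≠ 0 := by positivity
    rw [log_exp, div_neg, sub_neg_eq_add, eq_div_iff this]
    field_simp
  rw [hinv, log_exp, ← exp_sub, exp_le_exp]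
  convert sq_div_four_le_exp_sub_exp hx.le using 2 <;> field_simp

lemma tendsto_exp_quarter_log_sq :
    Tendsto (fun ε => exp (1 / 4 * log ε ^ 2)) (𝓝[>] 0) atTop := by
  refine tendsto_exp_atTop.comp (Tendsto.const_mul_atTop (by norm_num) ?_)
  simpa only [sq] using tendsto_log_nhdsGT_zero.atBot_mul_atBot₀ tendsto_log_nhdsGT_zero

/-- For all sufficiently small `ε ∈ (0,1)`, with `g(z) = exp(exp(1/z))` one has
`g(−1/log ε)/g(ε − 1/log ε) ≥ exp((1/4)(log ε)²)`; in particular this ratio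
tends to `∞` as `ε → 0⁺`. -/
theorem stmt13 :
    (∃ ε₀ : ℝ, 0 < ε₀ ∧ ε₀ < 1 ∧ ∀ ε : ℝ, 0 < ε → ε < ε₀ →
      Real.exp ((1 / 4) * (Real.log ε) ^ 2) ≤
        Real.exp (Real.exp (1 / (-1 / Real.log ε))) /
          Real.exp (Real.exp (1 / (ε - 1 / Real.log ε)))) ∧
    Filter.Tendsto
      (fun ε : ℝ =>
        Real.exp (Real.exp (1 / (-1 / Real.log ε))) /
          Real.exp (Real.exp (1 / (ε - 1 / Real.log ε))))
      (nhdsWithin 0 (Set.Ioi 0)) Filter.atTop := by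
  refine ⟨⟨1 / 2, by norm_num, by norm_num, fun ε h0 h1 ↦ exp_quarter_log_sq_le h0 (by linarith)⟩,
    tendsto_atTop_mono' _ ?_ tendsto_exp_quarter_log_sq⟩
  filter_upwards [Ioo_mem_nhdsGT one_pos] with ε hε using exp_quarter_log_sq_le hε.1 hε.2
end

section
/- Let M ⊆ ℝ^p be a smooth compact embedded d-dimensional submanifold and fix x ∈ M with ι(x) = 0, where the tangent space at x is span(e₁, …, e_d). For v in a small ball in ℝ^d, let g_k(v) (k = 1,…,p−d) be the smooth graph functions with g_k(v) = O(‖v‖²), and define J_x(v) = sqrt(‖v‖² + g₁(v)² + ⋯ + g_{p−d}(v)²) · v/‖v‖ for v ≠ 0, J_x(0)=0. Then for sufficiently small λ > 0, J_x is a bijective bi-Lipschitz homeomorphism from [−λ, λ]^d onto its image, smooth away from 0, with bi-Lipschitz constant D depending only on bounds on the second fundamental form; moreover [−λ,λ]^d ⊆ J_x([−λ,λ]^d) ⊆ [−Dλ, Dλ]^d and ‖J_x(v)‖ ≥ ‖v‖. -/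
lemma sqrt_le_of_sq {a b : ℝ} (hb : 0 ≤ b) (h : a ≤ b ^ 2) : Real.sqrt a ≤ b := by
  calc Real.sqrt a ≤ Real.sqrt (b ^ 2) := Real.sqrt_le_sqrt h
    _ = b := Real.sqrt_sq hb

lemma abs_sqrt_one_add_sub {x y : ℝ} (hx : 0 ≤ x) (hy : 0 ≤ y) :
    |Real.sqrt (1 + x) - Real.sqrt (1 + y)| ≤ |x - y| / 2 := by
  have key : ∀ a b : ℝ, 0 ≤ b → b ≤ a →
      Real.sqrt (1 + a) - Real.sqrt (1 + b) ≤ (a - b) / 2 := by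
    intro a b hb hba
    have h1 : (1:ℝ) ≤ Real.sqrt (1 + b) := by
      have := Real.sqrt_le_sqrt (show (1:ℝ) ≤ 1 + b by linarith)
      simpa using this
    have hs : Real.sqrt (1 + b) ^ 2 = 1 + b := Real.sq_sqrt (by linarith)
    have h2 : Real.sqrt (1 + a) ≤ Real.sqrt (1 + b) + (a - b) / 2 := by
      apply sqrt_le_of_sq (by linarith)
      nlinarith
    linarith
  rcases le_total y x with h | h
  · have h1 : Real.sqrt (1 + y) ≤ Real.sqrt (1 + x) := Real.sqrt_le_sqrt (by linarith)
    rw [abs_of_nonneg (by linarith), abs_of_nonneg (by linarith)]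
    exact key x y hy h
  · have h1 : Real.sqrt (1 + x) ≤ Real.sqrt (1 + y) := Real.sqrt_le_sqrt (by linarith)
    rw [abs_of_nonpos (by linarith), abs_of_nonpos (by linarith)]
    have := key y x hx h
    linarith

lemma coord_abs_le_norm {d : ℕ} (v : EuclideanSpace ℝ (Fin d)) (i : Fin d) : |v i| ≤ ‖v‖ := by
  rw [EuclideanSpace.norm_eq]
  have h : |v i| ^ 2 ≤ ∑ j, ‖v j‖ ^ 2 := by
    have := Finset.single_le_sum (f := fun j => ‖v j‖ ^ 2)
      (fun j _ => sq_nonneg _) (Finset.mem_univ i)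
    simpa [Real.norm_eq_abs] using this
  calc |v i| = Real.sqrt (|v i| ^ 2) := (Real.sqrt_sq (abs_nonneg _)).symm
    _ ≤ _ := Real.sqrt_le_sqrt h

/-- The closed coordinate cube `[-a, a]^d` in `ℝ^d`. -/
def cube (d : ℕ) (a : ℝ) : Set (EuclideanSpace ℝ (Fin d)) :=
  {v | ∀ i, |v i| ≤ a}

lemma norm_le_of_mem_cube {d : ℕ} {v : EuclideanSpace ℝ (Fin d)} {a : ℝ} (ha : 0 ≤ a)
    (hv : v ∈ cube d a) : ‖v‖ ≤ Real.sqrt d * a := by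
  rw [EuclideanSpace.norm_eq]
  have h : ∑ j, ‖v j‖ ^ 2 ≤ (d : ℝ) * a ^ 2 := by
    calc ∑ j, ‖v j‖ ^ 2 ≤ ∑ _j : Fin d, a ^ 2 := by
          apply Finset.sum_le_sum
          intro j _
          have h1 := hv j
          rw [Real.norm_eq_abs]
          nlinarith [abs_nonneg (v j)]
      _ = (d : ℝ) * a ^ 2 := by
          rw [Finset.sum_const, Finset.card_univ, Fintype.card_fin, nsmul_eq_mul]
  calc Real.sqrt (∑ j, ‖v j‖ ^ 2) ≤ Real.sqrt ((d : ℝ) * a ^ 2) := Real.sqrt_le_sqrt h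
    _ = Real.sqrt d * a := by
        rw [Real.sqrt_mul (by positivity), Real.sqrt_sq ha]

/-- The map `J(v) = sqrt(‖v‖² + Σₖ gₖ(v)²) · v/‖v‖` associated with the local
graph representation of a submanifold (with `J 0 = 0`). -/
noncomputable def Jmap {d m : ℕ} (g : Fin m → EuclideanSpace ℝ (Fin d) → ℝ)
    (v : EuclideanSpace ℝ (Fin d)) : EuclideanSpace ℝ (Fin d) :=
  (Real.sqrt (‖v‖ ^ 2 + ∑ k, g k v ^ 2) / ‖v‖) • v

set_option maxHeartbeats 2000000 in
/-- If the graph functions `gₖ` are smooth with `gₖ(0) = 0` and `Dgₖ(0) = 0`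
(so `gₖ(v) = O(‖v‖²)`), then for small `λ > 0` the map `J` is injective and
bi-Lipschitz (with some constant `D ≥ 1`) on the cube `[-λ,λ]^d`, smooth away
from `0`, satisfies `[-λ,λ]^d ⊆ J([-λ,λ]^d) ⊆ [-Dλ, Dλ]^d`, and
`‖J(v)‖ ≥ ‖v‖`. -/
theorem stmt17 (p d : ℕ) (hdp : d ≤ p) (r : ℝ) (hr : 0 < r)
    (g : Fin (p - d) → EuclideanSpace ℝ (Fin d) → ℝ)
    (hg : ∀ k, ContDiffOn ℝ (⊤ : ℕ∞) (g k) (Metric.ball 0 r))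
    (hg0 : ∀ k, g k 0 = 0)
    (hgd : ∀ k, fderiv ℝ (g k) 0 = 0) :
    ∃ lam D : ℝ, 0 < lam ∧ 1 ≤ D ∧
      cube d lam ⊆ Metric.ball (0 : EuclideanSpace ℝ (Fin d)) r ∧
      Set.InjOn (Jmap g) (cube d lam) ∧
      (∀ v ∈ cube d lam, ∀ w ∈ cube d lam,
        (1 / D) * ‖v - w‖ ≤ ‖Jmap g v - Jmap g w‖ ∧
        ‖Jmap g v - Jmap g w‖ ≤ D * ‖v - w‖) ∧
      ContDiffOn ℝ (⊤ : ℕ∞) (Jmap g) (cube d lam \ {0}) ∧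
      cube d lam ⊆ Jmap g '' cube d lam ∧
      Jmap g '' cube d lam ⊆ cube d (D * lam) ∧
      (∀ v ∈ cube d lam, ‖v‖ ≤ ‖Jmap g v‖) := by
  classical
  have hr2 : (0:ℝ) < r / 2 := by linarith
  have hrr : r / 2 < r := by linarith
  set B : Set (EuclideanSpace ℝ (Fin d)) := Metric.closedBall 0 (r/2) with hBdef
  have hBsub : B ⊆ Metric.ball 0 r := Metric.closedBall_subset_ball hrr
  -- Step 1 : uniform bound on the derivatives of the `g k`
  obtain ⟨A, hA1, hA⟩ : ∃ A : ℝ, 1 ≤ A ∧ ∀ k, ∀ x ∈ B, ‖fderiv ℝ (g k) x‖ ≤ A * ‖x‖ := by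
    have step : ∀ k : Fin (p-d), ∃ C : ℝ, 0 ≤ C ∧ ∀ x ∈ B, ‖fderiv ℝ (g k) x‖ ≤ C * ‖x‖ := by
      intro k
      have h1 : ContDiffOn ℝ 1 (fderiv ℝ (g k)) (Metric.ball 0 r) :=
        (hg k).fderiv_of_isOpen Metric.isOpen_ball (by exact WithTop.coe_le_coe.2 le_top)
      have h2 : ContinuousOn (fderiv ℝ (fderiv ℝ (g k))) (Metric.ball 0 r) :=
        h1.continuousOn_fderiv_of_isOpen Metric.isOpen_ball le_rfl
      have h2' : ContinuousOn (fderiv ℝ (fderiv ℝ (g k))) (Metric.closedBall 0 (r/2)) :=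
        h2.mono hBsub
      obtain ⟨C, hC⟩ := (isCompact_closedBall (0:EuclideanSpace ℝ (Fin d))
        (r/2)).exists_bound_of_continuousOn (f := fderiv ℝ (fderiv ℝ (g k))) h2'
      have hC0 : 0 ≤ C := le_trans (norm_nonneg _) (hC 0 (Metric.mem_closedBall_self hr2.le))
      refine ⟨C, hC0, fun x hx => ?_⟩
      have hd2 : ∀ y ∈ B, HasFDerivWithinAt (fderiv ℝ (g k)) (fderiv ℝ (fderiv ℝ (g k)) y) B y := by
        intro y hy
        exact ((h1.differentiableOn one_ne_zero).differentiableAt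
          (Metric.isOpen_ball.mem_nhds (hBsub hy))).hasFDerivAt.hasFDerivWithinAt
      have := (convex_closedBall (0:EuclideanSpace ℝ (Fin d))
        (r/2)).norm_image_sub_le_of_norm_hasFDerivWithin_le hd2 (fun y hy => hC y hy)
        (Metric.mem_closedBall_self hr2.le) hx
      simpa [hgd k] using this
    choose C hC0 hC using step
    refine ⟨1 + ∑ k, C k, ?_, fun k x hx => ?_⟩
    · have := Finset.sum_nonneg (fun j (_ : j ∈ Finset.univ) => hC0 j)
      linarith
    have h1 : C k ≤ 1 + ∑ j, C j := by
      have := Finset.single_le_sum (f := fun j => C j) (fun j _ => hC0 j) (Finset.mem_univ k)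
      linarith
    calc ‖fderiv ℝ (g k) x‖ ≤ C k * ‖x‖ := hC k x hx
      _ ≤ (1 + ∑ j, C j) * ‖x‖ := mul_le_mul_of_nonneg_right h1 (norm_nonneg x)
  have hA0 : (0:ℝ) < A := lt_of_lt_of_le one_pos hA1
  -- Step 2 : second-order bound on `g k` itself
  have hgB : ∀ k, ∀ x ∈ B, |g k x| ≤ A * ‖x‖ ^ 2 := by
    intro k x hx
    have hxr : ‖x‖ ≤ r/2 := by simpa [hBdef, mem_closedBall_zero_iff] using hx
    set s' : Set (EuclideanSpace ℝ (Fin d)) := Metric.closedBall 0 ‖x‖ with hs'def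
    have hs'B : s' ⊆ B := Metric.closedBall_subset_closedBall hxr
    have hd2 : ∀ y ∈ s', HasFDerivWithinAt (g k) (fderiv ℝ (g k) y) s' y := fun y hy =>
      (((hg k).differentiableOn (by simp)).differentiableAt
        (Metric.isOpen_ball.mem_nhds (hBsub (hs'B hy)))).hasFDerivAt.hasFDerivWithinAt
    have hb : ∀ y ∈ s', ‖fderiv ℝ (g k) y‖ ≤ A * ‖x‖ := by
      intro y hy
      have h1 := hA k y (hs'B hy)
      have h2 : ‖y‖ ≤ ‖x‖ := by simpa [hs'def, mem_closedBall_zero_iff] using hy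
      nlinarith
    have := (convex_closedBall (0:EuclideanSpace ℝ (Fin d))
      ‖x‖).norm_image_sub_le_of_norm_hasFDerivWithin_le hd2 hb
      (Metric.mem_closedBall_self (norm_nonneg x)) (mem_closedBall_zero_iff.2 le_rfl)
    have h3 : |g k x| ≤ A * ‖x‖ * ‖x‖ := by
      simpa [hg0 k, Real.norm_eq_abs] using this
    nlinarith
  -- Step 3 : Lipschitz bound for `g k` on small balls
  have hglip : ∀ k, ∀ c : ℝ, c ≤ r/2 →
      ∀ v ∈ Metric.closedBall (0:EuclideanSpace ℝ (Fin d)) c,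
      ∀ w ∈ Metric.closedBall (0:EuclideanSpace ℝ (Fin d)) c,
      |g k v - g k w| ≤ A * c * ‖v - w‖ := by
    intro k c hcr v hv w hw
    have hsub : Metric.closedBall (0:EuclideanSpace ℝ (Fin d)) c ⊆ B :=
      Metric.closedBall_subset_closedBall hcr
    have hd2 : ∀ y ∈ Metric.closedBall (0:EuclideanSpace ℝ (Fin d)) c,
        HasFDerivWithinAt (g k) (fderiv ℝ (g k) y) (Metric.closedBall 0 c) y := fun y hy =>
      (((hg k).differentiableOn (by simp)).differentiableAt
        (Metric.isOpen_ball.mem_nhds (hBsub (hsub hy)))).hasFDerivAt.hasFDerivWithinAt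
    have hb : ∀ y ∈ Metric.closedBall (0:EuclideanSpace ℝ (Fin d)) c,
        ‖fderiv ℝ (g k) y‖ ≤ A * c := by
      intro y hy
      have h1 := hA k y (hsub hy)
      have h2 : ‖y‖ ≤ c := by simpa [mem_closedBall_zero_iff] using hy
      nlinarith
    have := (convex_closedBall (0:EuclideanSpace ℝ (Fin d))
      c).norm_image_sub_le_of_norm_hasFDerivWithin_le hd2 hb hw hv
    simpa [Real.norm_eq_abs] using this
  -- Step 4 : choice of scales
  set M : ℝ := ((p - d : ℕ) : ℝ) with hMdef
  have hM0 : 0 ≤ M := Nat.cast_nonneg _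
  set s : ℝ := min (r/2) (1/(3*(M+1)*A)) with hsdef
  have hs0 : 0 < s := lt_min hr2 (by positivity)
  have hsr : s ≤ r/2 := min_le_left _ _
  have hkey : 5/2 * M * A^2 * s^2 ≤ 1/2 := by
    have h1 : s ≤ 1/(3*(M+1)*A) := min_le_right _ _
    have h2 : (0:ℝ) < 3*(M+1)*A := by positivity
    have h4 : s * (3*(M+1)*A) ≤ 1 := by
      rw [← le_div_iff₀ h2]; exact h1
    have h5 : (s * (3*(M+1)*A))^2 ≤ 1 := by nlinarith [mul_nonneg hs0.le h2.le]
    nlinarith [sq_nonneg (A*s), hM0, sq_nonneg s, hA0.le]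
  have hJ0 : Jmap g 0 = 0 := by simp [Jmap]
  -- Step 5 : the key Lipschitz estimate for E = Jmap - id
  have hEkey : ∀ v w : EuclideanSpace ℝ (Fin d), ‖v‖ ≤ s → ‖w‖ ≤ s → ‖w‖ ≤ ‖v‖ →
      ‖(Jmap g v - v) - (Jmap g w - w)‖ ≤ 1/2 * ‖v - w‖ := by
    intro v w hvs hws hwv
    have facts : ∀ u : EuclideanSpace ℝ (Fin d), 0 < ‖u‖ → ‖u‖ ≤ s →
        (0 ≤ (∑ k, g k u ^ 2) / ‖u‖^2) ∧
        (Jmap g u - u = (Real.sqrt (1 + (∑ k, g k u ^ 2)/‖u‖^2) - 1) • u) ∧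
        ((∑ k, g k u ^ 2)/‖u‖^2 ≤ M * A^2 * ‖u‖^2) ∧
        (0 ≤ Real.sqrt (1 + (∑ k, g k u ^ 2)/‖u‖^2) - 1) ∧
        (Real.sqrt (1 + (∑ k, g k u ^ 2)/‖u‖^2) - 1 ≤ M/2 * A^2 * ‖u‖^2) := by
      intro u hu0 hus
      have huB : u ∈ B := by
        rw [hBdef, mem_closedBall_zero_iff]; linarith
      have hG0 : (0:ℝ) ≤ ∑ k, g k u ^ 2 := Finset.sum_nonneg fun k _ => sq_nonneg _
      have hψ0 : (0:ℝ) ≤ (∑ k, g k u ^ 2) / ‖u‖^2 := by positivity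
      have hGle : (∑ k, g k u ^ 2) ≤ M * (A^2 * ‖u‖^4) := by
        calc (∑ k, g k u ^ 2) ≤ ∑ _k : Fin (p-d), A^2 * ‖u‖^4 := by
              apply Finset.sum_le_sum
              intro k _
              have h1 := hgB k u huB
              nlinarith [abs_nonneg (g k u), sq_abs (g k u), norm_nonneg u]
          _ = M * (A^2 * ‖u‖^4) := by
              rw [Finset.sum_const, Finset.card_univ, Fintype.card_fin, nsmul_eq_mul, hMdef]
      have hψle : (∑ k, g k u ^ 2)/‖u‖^2 ≤ M * A^2 * ‖u‖^2 := by
        rw [div_le_iff₀ (by positivity : (0:ℝ) < ‖u‖^2)]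
        calc (∑ k, g k u ^ 2) ≤ M * (A^2 * ‖u‖^4) := hGle
          _ = M * A^2 * ‖u‖^2 * ‖u‖^2 := by ring
      have hid : Jmap g u - u = (Real.sqrt (1 + (∑ k, g k u ^ 2)/‖u‖^2) - 1) • u := by
        have e1 : (1 : ℝ) + (∑ k, g k u ^ 2)/‖u‖^2 = (‖u‖^2 + ∑ k, g k u ^ 2)/‖u‖^2 := by
          field_simp
        rw [Jmap, e1, Real.sqrt_div' _ (sq_nonneg ‖u‖), Real.sqrt_sq (norm_nonneg u),
          sub_smul, one_smul]
      have hsq1 : (1:ℝ) ≤ Real.sqrt (1 + (∑ k, g k u ^ 2)/‖u‖^2) := by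
        have := Real.sqrt_le_sqrt (show (1:ℝ) ≤ 1 + (∑ k, g k u ^ 2)/‖u‖^2 by linarith)
        simpa using this
      have hρle : Real.sqrt (1 + (∑ k, g k u ^ 2)/‖u‖^2) - 1 ≤ M/2 * A^2 * ‖u‖^2 := by
        have h1 := abs_sqrt_one_add_sub hψ0 (le_refl (0:ℝ))
        rw [add_zero, Real.sqrt_one, sub_zero] at h1
        rw [abs_of_nonneg hψ0] at h1
        have h2 : Real.sqrt (1 + (∑ k, g k u ^ 2)/‖u‖^2) - 1 ≤ ((∑ k, g k u ^ 2)/‖u‖^2)/2 := by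
          have h3 := le_of_abs_le h1
          linarith
        linarith [hψle]
      exact ⟨hψ0, hid, hψle, by linarith, hρle⟩
    rcases eq_or_ne v 0 with hv0 | hv0
    · have hw0 : w = 0 := by
        rw [hv0, norm_zero] at hwv
        exact norm_le_zero_iff.1 hwv
      simp [hv0, hw0, hJ0]
    have ha0 : 0 < ‖v‖ := norm_pos_iff.2 hv0
    rcases eq_or_ne w 0 with hw0 | hw0
    · obtain ⟨hψ0, hid, hψle, hρ0, hρle⟩ := facts v ha0 hvs
      rw [hw0, hJ0, sub_zero, sub_zero, hid, norm_smul, Real.norm_eq_abs,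
        abs_of_nonneg hρ0]
      have h1 : M/2 * A^2 * ‖v‖^2 ≤ 1/2 := by nlinarith [sq_nonneg A, norm_nonneg v]
      rw [sub_zero]
      have h2 := mul_le_mul_of_nonneg_right (hρle.trans h1) (norm_nonneg v)
      linarith
    -- main case
    have hb0 : 0 < ‖w‖ := norm_pos_iff.2 hw0
    obtain ⟨hψv0, hidv, hψvle, hρv0, hρvle⟩ := facts v ha0 hvs
    obtain ⟨hψw0, hidw, hψwle, hρw0, hρwle⟩ := facts w hb0 hws
    set ψv : ℝ := (∑ k, g k v ^ 2)/‖v‖^2 with hψvdef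
    set ψw : ℝ := (∑ k, g k w ^ 2)/‖w‖^2 with hψwdef
    set ρv : ℝ := Real.sqrt (1 + ψv) - 1 with hρvdef
    set ρw : ℝ := Real.sqrt (1 + ψw) - 1 with hρwdef
    have hdec : (Jmap g v - v) - (Jmap g w - w) = ρv • (v - w) + (ρv - ρw) • w := by
      rw [hidv, hidw]
      module
    have hnorm1 : ‖(Jmap g v - v) - (Jmap g w - w)‖ ≤ ρv * ‖v - w‖ + |ρv - ρw| * ‖w‖ := by
      rw [hdec]
      calc ‖ρv • (v - w) + (ρv - ρw) • w‖ ≤ ‖ρv • (v - w)‖ + ‖(ρv - ρw) • w‖ := norm_add_le _ _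
        _ = |ρv| * ‖v - w‖ + |ρv - ρw| * ‖w‖ := by rw [norm_smul, norm_smul, Real.norm_eq_abs,
            Real.norm_eq_abs]
        _ = ρv * ‖v - w‖ + |ρv - ρw| * ‖w‖ := by rw [abs_of_nonneg hρv0]
    -- bound on |ρv - ρw|
    have hρdiff : |ρv - ρw| ≤ |ψv - ψw| / 2 := by
      have := abs_sqrt_one_add_sub hψv0 hψw0
      simpa [hρvdef, hρwdef, sub_sub_sub_cancel_right] using this
    -- bound on |ψv - ψw|
    have hψveq : ψv = ∑ k, (g k v / ‖v‖)^2 := by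
      rw [hψvdef, Finset.sum_div]
      exact Finset.sum_congr rfl fun k _ => (div_pow _ _ _).symm
    have hψweq : ψw = ∑ k, (g k w / ‖w‖)^2 := by
      rw [hψwdef, Finset.sum_div]
      exact Finset.sum_congr rfl fun k _ => (div_pow _ _ _).symm
    have habsub : ‖v‖ - ‖w‖ ≤ ‖v - w‖ := norm_sub_norm_le v w
    have hvB : v ∈ B := by rw [hBdef, mem_closedBall_zero_iff]; linarith
    have hwB : w ∈ B := by rw [hBdef, mem_closedBall_zero_iff]; linarith
    have hterm : ∀ k, |(g k v / ‖v‖)^2 - (g k w / ‖w‖)^2| ≤ 4 * A^2 * s * ‖v - w‖ := by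
      intro k
      have hu1 : |g k v / ‖v‖| ≤ A * s := by
        rw [abs_div, abs_of_pos ha0, div_le_iff₀ ha0]
        have h1 := hgB k v hvB
        have h2 := mul_le_mul_of_nonneg_left hvs (mul_nonneg hA0.le ha0.le)
        nlinarith [h1, h2]
      have hu2 : |g k w / ‖w‖| ≤ A * s := by
        rw [abs_div, abs_of_pos hb0, div_le_iff₀ hb0]
        have h1 := hgB k w hwB
        have h2 := mul_le_mul_of_nonneg_left hws (mul_nonneg hA0.le hb0.le)
        nlinarith [h1, h2]
      have hu3 : |g k v / ‖v‖ - g k w / ‖w‖| ≤ 2 * A * ‖v - w‖ := by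
        have h5 : |g k v - g k w| ≤ A * ‖v‖ * ‖v - w‖ := by
          apply hglip k ‖v‖ (le_trans hvs hsr) v (mem_closedBall_zero_iff.2 le_rfl) w
          rw [mem_closedBall_zero_iff]; exact hwv
        have h6 : |g k w| ≤ A * ‖w‖^2 := hgB k w hwB
        have heq : g k v / ‖v‖ - g k w / ‖w‖
            = (g k v - g k w)/‖v‖ + g k w * (1/‖v‖ - 1/‖w‖) := by
          field_simp
          ring
        rw [heq]
        have t1 : |(g k v - g k w)/‖v‖| ≤ A * ‖v - w‖ := by
          rw [abs_div, abs_of_pos ha0, div_le_iff₀ ha0]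
          nlinarith
        have t2 : |g k w * (1/‖v‖ - 1/‖w‖)| ≤ A * ‖v - w‖ := by
          rw [abs_mul]
          have e2 : |1/‖v‖ - 1/‖w‖| = (‖v‖ - ‖w‖)/(‖v‖*‖w‖) := by
            rw [abs_of_nonpos (by
              rw [sub_nonpos]
              exact one_div_le_one_div_of_le hb0 hwv)]
            field_simp
            ring
          rw [e2]
          have hfr0 : 0 ≤ (‖v‖ - ‖w‖)/(‖v‖*‖w‖) := by
            apply div_nonneg (by linarith) (by positivity)
          calc |g k w| * ((‖v‖ - ‖w‖)/(‖v‖*‖w‖))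
              ≤ (A * ‖w‖^2) * ((‖v‖ - ‖w‖)/(‖v‖*‖w‖)) := mul_le_mul_of_nonneg_right h6 hfr0
            _ = A * (‖w‖ * (‖v‖ - ‖w‖) / ‖v‖) := by
                field_simp
            _ ≤ A * (‖v‖ - ‖w‖) := by
                apply mul_le_mul_of_nonneg_left _ hA0.le
                rw [div_le_iff₀ ha0]
                nlinarith
            _ ≤ A * ‖v - w‖ := mul_le_mul_of_nonneg_left habsub hA0.le
        calc |(g k v - g k w)/‖v‖ + g k w * (1/‖v‖ - 1/‖w‖)|
            ≤ |(g k v - g k w)/‖v‖| + |g k w * (1/‖v‖ - 1/‖w‖)| := abs_add_le _ _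
          _ ≤ A * ‖v - w‖ + A * ‖v - w‖ := add_le_add t1 t2
          _ = 2 * A * ‖v - w‖ := by ring
      have heq2 : |(g k v / ‖v‖)^2 - (g k w / ‖w‖)^2|
          = |g k v / ‖v‖ - g k w / ‖w‖| * |g k v / ‖v‖ + g k w / ‖w‖| := by
        rw [← abs_mul]
        congr 1
        ring
      rw [heq2]
      have hsum : |g k v / ‖v‖ + g k w / ‖w‖| ≤ 2 * (A * s) := by
        calc |g k v / ‖v‖ + g k w / ‖w‖| ≤ |g k v / ‖v‖| + |g k w / ‖w‖| := abs_add_le _ _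
          _ ≤ 2 * (A * s) := by linarith
      calc |g k v / ‖v‖ - g k w / ‖w‖| * |g k v / ‖v‖ + g k w / ‖w‖|
          ≤ (2 * A * ‖v - w‖) * (2 * (A * s)) := by
            apply mul_le_mul hu3 hsum (abs_nonneg _) (by positivity)
        _ = 4 * A^2 * s * ‖v - w‖ := by ring
    have hψdiff : |ψv - ψw| ≤ 4 * M * A^2 * s * ‖v - w‖ := by
      rw [hψveq, hψweq, ← Finset.sum_sub_distrib]
      calc |∑ k, ((g k v / ‖v‖)^2 - (g k w / ‖w‖)^2)|
          ≤ ∑ k, |(g k v / ‖v‖)^2 - (g k w / ‖w‖)^2| := Finset.abs_sum_le_sum_abs _ _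
        _ ≤ ∑ _k : Fin (p-d), 4 * A^2 * s * ‖v - w‖ :=
            Finset.sum_le_sum fun k _ => hterm k
        _ = M * (4 * A^2 * s * ‖v - w‖) := by
            rw [Finset.sum_const, Finset.card_univ, Fintype.card_fin, nsmul_eq_mul, hMdef]
        _ = 4 * M * A^2 * s * ‖v - w‖ := by ring
    -- put everything together
    have hρvs : ρv ≤ M/2 * A^2 * s^2 := by
      have hv2 : ‖v‖^2 ≤ s^2 := by nlinarith [norm_nonneg v]
      have h := mul_le_mul_of_nonneg_left hv2 (by positivity : (0:ℝ) ≤ M/2 * A^2)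
      calc ρv ≤ M/2 * A^2 * ‖v‖^2 := hρvle
        _ ≤ M/2 * A^2 * s^2 := by
          have e : M/2 * A^2 * ‖v‖^2 = M/2 * A^2 * ‖v‖^2 := rfl
          nlinarith [h]
    have h9 : |ρv - ρw| * ‖w‖ ≤ 2 * M * A^2 * s^2 * ‖v - w‖ := by
      calc |ρv - ρw| * ‖w‖ ≤ (|ψv - ψw| / 2) * ‖w‖ :=
            mul_le_mul_of_nonneg_right hρdiff (norm_nonneg w)
        _ ≤ (4 * M * A^2 * s * ‖v - w‖ / 2) * s := by
            apply mul_le_mul (by linarith) hws (norm_nonneg w)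
            linarith [abs_nonneg (ψv - ψw), hψdiff]
        _ = 2 * M * A^2 * s^2 * ‖v - w‖ := by ring
    have h10 : ρv * ‖v - w‖ ≤ M/2 * A^2 * s^2 * ‖v - w‖ :=
      mul_le_mul_of_nonneg_right hρvs (norm_nonneg _)
    have h11 : 5/2 * M * A^2 * s^2 * ‖v - w‖ ≤ 1/2 * ‖v - w‖ :=
      mul_le_mul_of_nonneg_right hkey (norm_nonneg _)
    calc ‖(Jmap g v - v) - (Jmap g w - w)‖ ≤ ρv * ‖v - w‖ + |ρv - ρw| * ‖w‖ := hnorm1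
      _ ≤ M/2 * A^2 * s^2 * ‖v - w‖ + 2 * M * A^2 * s^2 * ‖v - w‖ := add_le_add h10 h9
      _ = 5/2 * M * A^2 * s^2 * ‖v - w‖ := by ring
      _ ≤ 1/2 * ‖v - w‖ := h11
  have hE : ∀ v w : EuclideanSpace ℝ (Fin d), ‖v‖ ≤ s → ‖w‖ ≤ s →
      ‖(Jmap g v - v) - (Jmap g w - w)‖ ≤ 1/2 * ‖v - w‖ := by
    intro v w hv hw
    rcases le_total ‖w‖ ‖v‖ with h | h
    · exact hEkey v w hv hw h
    · have h2 := hEkey w v hw hv h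
      calc ‖(Jmap g v - v) - (Jmap g w - w)‖ = ‖(Jmap g w - w) - (Jmap g v - v)‖ :=
            norm_sub_rev _ _
        _ ≤ 1/2 * ‖w - v‖ := h2
        _ = 1/2 * ‖v - w‖ := by rw [norm_sub_rev]
  -- bilipschitz bounds
  have hlow : ∀ v w : EuclideanSpace ℝ (Fin d), ‖v‖ ≤ s → ‖w‖ ≤ s →
      1/2 * ‖v - w‖ ≤ ‖Jmap g v - Jmap g w‖ ∧ ‖Jmap g v - Jmap g w‖ ≤ 3/2 * ‖v - w‖ := by
    intro v w hv hw
    have h := hE v w hv hw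
    have hid : Jmap g v - Jmap g w = (v - w) + ((Jmap g v - v) - (Jmap g w - w)) := by abel
    have hid2 : v - w = (Jmap g v - Jmap g w) - ((Jmap g v - v) - (Jmap g w - w)) := by abel
    constructor
    · have h2 : ‖v - w‖ ≤ ‖Jmap g v - Jmap g w‖ + ‖(Jmap g v - v) - (Jmap g w - w)‖ := by
        rw [hid2]
        exact norm_sub_le _ _
      linarith
    · rw [hid]
      calc ‖(v - w) + ((Jmap g v - v) - (Jmap g w - w))‖
          ≤ ‖v - w‖ + ‖(Jmap g v - v) - (Jmap g w - w)‖ := norm_add_le _ _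
        _ ≤ 3/2 * ‖v - w‖ := by linarith
  -- ‖Jmap v‖ ≥ ‖v‖
  have hJnorm : ∀ v : EuclideanSpace ℝ (Fin d), ‖v‖ ≤ ‖Jmap g v‖ := by
    intro v
    rcases eq_or_ne v 0 with h | h
    · simp [h, hJ0]
    · have ha : 0 < ‖v‖ := norm_pos_iff.2 h
      have hG : (0:ℝ) ≤ ∑ k, g k v ^ 2 := Finset.sum_nonneg fun k _ => sq_nonneg _
      have h1 : ‖v‖ ≤ Real.sqrt (‖v‖^2 + ∑ k, g k v ^ 2) := by
        calc ‖v‖ = Real.sqrt (‖v‖^2) := (Real.sqrt_sq (norm_nonneg v)).symm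
          _ ≤ Real.sqrt (‖v‖^2 + ∑ k, g k v ^ 2) := Real.sqrt_le_sqrt (by linarith)
      rw [Jmap, norm_smul, Real.norm_eq_abs,
        abs_of_nonneg (div_nonneg (Real.sqrt_nonneg _) ha.le), div_mul_cancel₀ _ ha.ne']
      exact h1
  -- choice of lam and D
  set lam : ℝ := s / (Real.sqrt d + 1) with hlamdef
  have hsd0 : (0:ℝ) ≤ Real.sqrt d := Real.sqrt_nonneg _
  have hlam0 : 0 < lam := div_pos hs0 (by linarith)
  set D : ℝ := 2 * (Real.sqrt d + 1) with hDdef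
  have hD1 : (1:ℝ) ≤ D := by rw [hDdef]; nlinarith
  have hD2 : (2:ℝ) ≤ D := by rw [hDdef]; nlinarith
  have hcube_s : ∀ v ∈ cube d lam, ‖v‖ ≤ s := by
    intro v hv
    have h1 : ‖v‖ ≤ Real.sqrt d * lam := norm_le_of_mem_cube hlam0.le hv
    have h2 : Real.sqrt d * lam ≤ s := by
      have h3 : lam * (Real.sqrt d + 1) = s := by
        rw [hlamdef]
        field_simp
      nlinarith [hlam0.le]
    linarith
  have hcube_r : cube d lam ⊆ Metric.ball (0 : EuclideanSpace ℝ (Fin d)) r := by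
    intro v hv
    rw [mem_ball_zero_iff]
    have := hcube_s v hv
    linarith
  -- injectivity
  have hinj : Set.InjOn (Jmap g) (cube d lam) := by
    intro v hv w hw h
    have h1 := (hlow v w (hcube_s v hv) (hcube_s w hw)).1
    rw [h, sub_self, norm_zero] at h1
    have h2 : ‖v - w‖ ≤ 0 := by linarith
    exact sub_eq_zero.1 (norm_le_zero_iff.1 h2)
  -- smoothness away from zero
  have hsmooth : ContDiffOn ℝ (⊤ : ℕ∞) (Jmap g)
      (Metric.ball (0 : EuclideanSpace ℝ (Fin d)) r \ {0}) := by
    intro x hx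
    have hx0 : x ≠ 0 := hx.2
    have hxr : x ∈ Metric.ball (0 : EuclideanSpace ℝ (Fin d)) r := hx.1
    apply ContDiffAt.contDiffWithinAt
    have h1 : ContDiffAt ℝ (⊤ : ℕ∞) (fun v : EuclideanSpace ℝ (Fin d) => ‖v‖^2 + ∑ k, g k v ^ 2) x := by
      apply ContDiffAt.add
      · exact (contDiff_norm_sq ℝ).contDiffAt
      · apply ContDiffAt.sum
        intro k _
        exact ((hg k).contDiffAt (Metric.isOpen_ball.mem_nhds hxr)).pow 2
    have hpos : (0:ℝ) < ‖x‖^2 + ∑ k, g k x ^ 2 := by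
      have hG : (0:ℝ) ≤ ∑ k, g k x ^ 2 := Finset.sum_nonneg fun k _ => sq_nonneg _
      have : (0:ℝ) < ‖x‖^2 := pow_pos (norm_pos_iff.2 hx0) 2
      linarith
    have h2 : ContDiffAt ℝ (⊤ : ℕ∞)
        (fun v : EuclideanSpace ℝ (Fin d) => Real.sqrt (‖v‖^2 + ∑ k, g k v ^ 2)) x :=
      h1.sqrt hpos.ne'
    have h3 : ContDiffAt ℝ (⊤ : ℕ∞) (fun v : EuclideanSpace ℝ (Fin d) => ‖v‖) x :=
      contDiffAt_norm ℝ hx0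
    exact (h2.div h3 (norm_ne_zero_iff.2 hx0)).smul contDiffAt_id
  -- surjectivity onto the cube
  have hsurj : cube d lam ⊆ Jmap g '' cube d lam := by
    intro u hu
    rcases eq_or_ne u 0 with h0 | h0
    · refine ⟨0, fun i => by simp [hlam0.le], by rw [hJ0, h0]⟩
    · have hu0 : 0 < ‖u‖ := norm_pos_iff.2 h0
      set F : ℝ → ℝ := fun t => Real.sqrt (‖t • u‖^2 + ∑ k, g k (t • u) ^ 2) with hFdef
      have hus : ‖u‖ ≤ s := hcube_s u hu
      have hmem : ∀ t ∈ Set.Icc (0:ℝ) 1,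
          t • u ∈ Metric.ball (0 : EuclideanSpace ℝ (Fin d)) r := by
        intro t ht
        rw [mem_ball_zero_iff, norm_smul, Real.norm_eq_abs, abs_of_nonneg ht.1]
        nlinarith [ht.2, hu0.le]
      have hFc : ContinuousOn F (Set.Icc 0 1) := by
        apply ContinuousOn.sqrt
        apply ContinuousOn.add
        · exact (((continuous_id.smul continuous_const).norm).pow 2).continuousOn
        · apply continuousOn_finset_sum
          intro k _
          have hc : ContinuousOn (g k) (Metric.ball (0 : EuclideanSpace ℝ (Fin d)) r) :=
            (hg k).continuousOn
          exact (hc.comp ((continuous_id.smul continuous_const).continuousOn) hmem).pow 2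
      have hF0 : F 0 = 0 := by
        simp [hFdef, hg0]
      have hF1 : ‖u‖ ≤ F 1 := by
        rw [hFdef]
        simp only [one_smul]
        have hG : (0:ℝ) ≤ ∑ k, g k u ^ 2 := Finset.sum_nonneg fun k _ => sq_nonneg _
        calc ‖u‖ = Real.sqrt (‖u‖^2) := (Real.sqrt_sq (norm_nonneg u)).symm
          _ ≤ Real.sqrt (‖u‖^2 + ∑ k, g k u ^ 2) := Real.sqrt_le_sqrt (by linarith)
      obtain ⟨t, htI, hFt⟩ := intermediate_value_Icc (by norm_num : (0:ℝ) ≤ 1) hFc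
        ⟨by rw [hF0]; exact hu0.le, hF1⟩
      have ht0 : t ≠ 0 := by
        rintro rfl
        rw [hF0] at hFt
        exact hu0.ne (by linarith [hFt])
      have htpos : 0 < t := lt_of_le_of_ne htI.1 (Ne.symm ht0)
      refine ⟨t • u, ?_, ?_⟩
      · intro i
        have h1 := hu i
        have h2 : (t • u) i = t * u i := rfl
        rw [h2, abs_mul, abs_of_pos htpos]
        nlinarith [htI.2, abs_nonneg (u i)]
      · have hnorm : ‖t • u‖ = t * ‖u‖ := by
          rw [norm_smul, Real.norm_eq_abs, abs_of_pos htpos]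
        rw [Jmap]
        rw [show Real.sqrt (‖t • u‖^2 + ∑ k, g k (t • u) ^ 2) = ‖u‖ from hFt]
        rw [hnorm, smul_smul]
        rw [show ‖u‖ / (t * ‖u‖) * t = 1 by field_simp [mul_comm]]
        exact one_smul _ _
  -- image inside the dilated cube
  have himg : Jmap g '' cube d lam ⊆ cube d (D * lam) := by
    rintro y ⟨v, hv, rfl⟩
    have hvs : ‖v‖ ≤ s := hcube_s v hv
    have h1 : ‖Jmap g v - v‖ ≤ 1/2 * ‖v‖ := by
      have := hE v 0 hvs (by simpa using hs0.le)
      simpa [hJ0] using this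
    have h2 : ‖Jmap g v‖ ≤ 3/2 * ‖v‖ := by
      calc ‖Jmap g v‖ = ‖v + (Jmap g v - v)‖ := by congr 1; abel
        _ ≤ ‖v‖ + ‖Jmap g v - v‖ := norm_add_le _ _
        _ ≤ 3/2 * ‖v‖ := by linarith
    have h3 : ‖v‖ ≤ Real.sqrt d * lam := norm_le_of_mem_cube hlam0.le hv
    intro i
    calc |Jmap g v i| ≤ ‖Jmap g v‖ := coord_abs_le_norm _ i
      _ ≤ 3/2 * ‖v‖ := h2
      _ ≤ 3/2 * (Real.sqrt d * lam) := by linarith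
      _ ≤ D * lam := by rw [hDdef]; nlinarith
  -- conclusion
  refine ⟨lam, D, hlam0, hD1, hcube_r, hinj, ?_, hsmooth.mono ?_, hsurj, himg,
    fun v _ => hJnorm v⟩
  · intro v hv w hw
    obtain ⟨hl, hu2⟩ := hlow v w (hcube_s v hv) (hcube_s w hw)
    constructor
    · have hDpos : (0:ℝ) < D := by linarith
      have h1 : 1/D ≤ 1/2 := by
        apply one_div_le_one_div_of_le (by norm_num) hD2
      calc 1/D * ‖v - w‖ ≤ 1/2 * ‖v - w‖ :=
          mul_le_mul_of_nonneg_right h1 (norm_nonneg _)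
        _ ≤ ‖Jmap g v - Jmap g w‖ := hl
    · calc ‖Jmap g v - Jmap g w‖ ≤ 3/2 * ‖v - w‖ := hu2
        _ ≤ D * ‖v - w‖ := mul_le_mul_of_nonneg_right (by linarith) (norm_nonneg _)
  · exact Set.diff_subset_diff hcube_r subset_rfl
end
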